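/- Let U = U_1 ⊔ U_2 and V = V_1 ⊔ V_2 be vertex sets with |U| = n, |U_i| = n_i ≥ 1, |V| = m, |V_i| = m_i ≥ 1 (i = 1,2). Let G be the bipartite graph K_{U_1,V} ∪ K_{U_2,V_2} and J_G ⊂ R = K[x_1,...,x_n,y_1,...,y_m] its cover ideal. Then the graded minimal free resolution of R/J_G has the form 0 → R(−n−m_2) ⊕ R(−m−n_1) → R(−(n_1+m_2)) ⊕ R(−m) ⊕ R(−n) → R → 0; in particular reg(J_G) = max{ n + m_2 − 1, m + n_1 − 1 }. -/

import Mathlib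

open MvPolynomial

/-- A vertex cover of a simple graph: a set of vertices meeting every edge. -/
def IsVertexCover {V : Type} (G : SimpleGraph V) (w : Finset V) : Prop :=
  ∀ ⦃a b : V⦄, G.Adj a b → a ∈ w ∨ b ∈ w

/-- The cover ideal of a finite simple graph `G`: the ideal of the polynomial ring
`K[x_v : v ∈ V]` generated by the monomials `∏_{x ∈ w} x` over all vertex covers `w`. -/
noncomputable def coverIdeal (K : Type) [Field K] {V : Type} [Fintype V]
    (G : SimpleGraph V) : Ideal (MvPolynomial V K) :=
  Ideal.span { p | ∃ w : Finset V, IsVertexCover G w ∧ p = ∏ x ∈ w, X x }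

/-- The linear map `(c_j) ↦ ∑_j c_j • v_j`. -/
noncomputable def lcomb {R M : Type} [CommRing R] [AddCommGroup M] [Module R M]
    {ι : Type} [Fintype ι] (v : ι → M) : (ι → R) →ₗ[R] M :=
  Fintype.linearCombination R v

/-- A minimal graded free resolution
`0 → F_len → ⋯ → F_2 → F_1 → R → R/I → 0`
of the quotient of `R = K[x_1,…,x_N]` by a homogeneous ideal `I`, where
`F_i = ⊕_{j < rank i} R(-(deg i j))` is a graded free module.
The map `F_1 → R` sends the `j`-th basis vector to `gen j`, and for `i ≥ 1` the map
`F_{i+1} → F_i` is given by the matrix `mat (i-1)` (acting by `Matrix.mulVec`);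
all maps are graded (entries are homogeneous of the appropriate degrees), the
complex is exact at every `F_i`, the image of `F_1 → R` is `I`, and minimality
means that all matrix entries (and the generators) lie in the graded maximal ideal,
i.e. have vanishing constant coefficient. -/
structure MinimalGradedFreeResolution {K : Type} [Field K] {σ : Type}
    (I : Ideal (MvPolynomial σ K)) where
  len : ℕ
  rank : ℕ → ℕ
  deg : ∀ i : ℕ, Fin (rank i) → ℕ
  gen : Fin (rank 1) → MvPolynomial σ K
  mat : ∀ i : ℕ, Matrix (Fin (rank (i + 1))) (Fin (rank (i + 2))) (MvPolynomial σ K)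
  rank_pos : ∀ i, 1 ≤ i → i ≤ len → 0 < rank i
  rank_zero : ∀ i, len < i → rank i = 0
  span_gen : Ideal.span (Set.range gen) = I
  gen_hom : ∀ j, (gen j).IsHomogeneous (deg 1 j)
  mat_hom : ∀ i p q, mat i p q = 0 ∨
    (deg (i + 1) p ≤ deg (i + 2) q ∧
      (mat i p q).IsHomogeneous (deg (i + 2) q - deg (i + 1) p))
  exact_one : Function.Exact ⇑((mat 0).mulVecLin) ⇑(lcomb gen)
  exact_succ : ∀ i, Function.Exact ⇑((mat (i + 1)).mulVecLin) ⇑((mat i).mulVecLin)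
  minimal_gen : ∀ j, constantCoeff (gen j) = 0
  minimal_mat : ∀ i p q, constantCoeff (mat i p q) = 0

namespace MinimalGradedFreeResolution

variable {K : Type} [Field K] {σ : Type} {I : Ideal (MvPolynomial σ K)}

/-- The Castelnuovo–Mumford regularity of the ideal `I`, read off from a minimal graded
free resolution of `R/I`: `reg I = max_{i ≥ 0} (t_i(I) - i)` where
`t_i(I) = t_{i+1}(R/I)` is the largest twist in homological degree `i + 1`. -/
def regIdeal (res : MinimalGradedFreeResolution I) : ℕ :=
  Finset.sup (Finset.range res.len)
    (fun i => (Finset.univ.sup fun j => res.deg (i + 1) j) - i)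

/-- The Castelnuovo–Mumford regularity of the module `R/I`, read off from a minimal graded
free resolution: `reg (R/I) = max_{i ≥ 0} (t_i(R/I) - i)` (the `i = 0` term is `0`). -/
def regQuot (res : MinimalGradedFreeResolution I) : ℕ :=
  Finset.sup (Finset.range res.len)
    (fun i => (Finset.univ.sup fun j => res.deg (i + 1) j) - (i + 1))

end MinimalGradedFreeResolution

/-- The minimal number of generators of an ideal. -/
noncomputable def muIdeal {R : Type} [CommRing R] (I : Ideal R) : ℕ :=
  sInf {k | ∃ s : Finset R, s.card = k ∧ Ideal.span (s : Set R) = I}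

/-- The Hilbert function of `R/I` for a homogeneous ideal `I` of `R = K[x_1,…,x_N]`:
`d ↦ dim_K (R/I)_d = dim_K R_d - dim_K I_d`. -/
noncomputable def hilbQuot {K : Type} [Field K] {σ : Type}
    (I : Ideal (MvPolynomial σ K)) (d : ℕ) : ℕ :=
  Module.finrank K (homogeneousSubmodule σ K d) -
    Module.finrank K
      ((Submodule.restrictScalars K (I : Submodule (MvPolynomial σ K) (MvPolynomial σ K)) ⊓
        homogeneousSubmodule σ K d : Submodule K (MvPolynomial σ K)))

/-- `f 0, …, f (k-1)` is a regular sequence on `R`: each `f i` is a nonzerodivisor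
modulo the previous ones, and the `f i` generate a proper ideal. -/
def IsRegSeq {R : Type} [CommRing R] {k : ℕ} (f : Fin k → R) : Prop :=
  (∀ i : Fin k, ∀ r : R, f i * r ∈ Ideal.span (f '' {j | j < i}) →
      r ∈ Ideal.span (f '' {j | j < i})) ∧
  Ideal.span (Set.range f) ≠ ⊤

/-- The bipartite graph on `{x_1,…,x_n} ⊔ {y_1,…,y_n}` (vertices `0`-indexed) with edges
`{x_1, y_j}` for `1 ≤ j ≤ n` and `{x_i, y_i}` for `2 ≤ i ≤ n`. -/
def bipartiteFan (n : ℕ) : SimpleGraph (Fin n ⊕ Fin n) :=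
  SimpleGraph.fromRel (fun a b => ∃ i j : Fin n,
    a = Sum.inl i ∧ b = Sum.inr j ∧ ((i : ℕ) = 0 ∨ i = j))

/-- The bipartite graph `K_{U₁, V} ∪ K_{U₂, V₂}` on `U ⊔ V`, where `U = U₁ ⊔ U₂` with
`|U₁| = n₁`, `|U₂| = n₂` (`U₁` consists of the first `n₁` indices) and `V = V₁ ⊔ V₂` with
`|V₁| = m₁`, `|V₂| = m₂` (`V₂` consists of the last `m₂` indices). -/
def twoBlockBipartite (n₁ n₂ m₁ m₂ : ℕ) :
    SimpleGraph (Fin (n₁ + n₂) ⊕ Fin (m₁ + m₂)) :=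
  SimpleGraph.fromRel (fun a b => ∃ (i : Fin (n₁ + n₂)) (j : Fin (m₁ + m₂)),
    a = Sum.inl i ∧ b = Sum.inr j ∧ ((i : ℕ) < n₁ ∨ (n₁ ≤ (i : ℕ) ∧ m₁ ≤ (j : ℕ))))

/-- The index of the part containing a vertex of the complete tripartite graph. -/
def part3 {m₁ m₂ m₃ : ℕ} : Fin m₁ ⊕ Fin m₂ ⊕ Fin m₃ → ℕ :=
  Sum.elim (fun _ => 0) (Sum.elim (fun _ => 1) (fun _ => 2))

/-- The complete tripartite graph with parts of sizes `m₁, m₂, m₃`: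
two vertices are adjacent iff they lie in different parts. -/
def completeTripartite (m₁ m₂ m₃ : ℕ) : SimpleGraph (Fin m₁ ⊕ Fin m₂ ⊕ Fin m₃) :=
  SimpleGraph.fromRel (fun a b => part3 a ≠ part3 b)

/-- The index of the part containing a vertex of the complete 4-partite graph. -/
def part4 {m₁ m₂ m₃ m₄ : ℕ} : Fin m₁ ⊕ Fin m₂ ⊕ Fin m₃ ⊕ Fin m₄ → ℕ :=
  Sum.elim (fun _ => 0) (Sum.elim (fun _ => 1) (Sum.elim (fun _ => 2) (fun _ => 3)))

/-- The complete 4-partite graph with parts of sizes `m₁, m₂, m₃, m₄`: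
two vertices are adjacent iff they lie in different parts. -/
def complete4Partite (m₁ m₂ m₃ m₄ : ℕ) :
    SimpleGraph (Fin m₁ ⊕ Fin m₂ ⊕ Fin m₃ ⊕ Fin m₄) :=
  SimpleGraph.fromRel (fun a b => part4 a ≠ part4 b)

/-! Write `a, b, c, d` for the products of the variables in `U₁, U₂, V₁, V₂`. A vertex cover
missing a vertex of `U₁` contains `V`; one containing `U₁` but missing a vertex of `U₂` contains
`V₂`; so the minimal covers are `U₁ ∪ V₂`, `V` and `U`, and `J_G = (ad, cd, ab)`. The syzygies of
these generators are generated by `b · ad = d · ab` and `c · ad = a · cd`: since `d` is coprime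
to `ab` and `a` to `c`, a relation `y₀ ad + y₁ cd + y₂ ab = 0` forces `d ∣ y₂` and then `a ∣ y₁`.
The two syzygies are independent because `a, d ≠ 0`, and the twists are read off from the degrees
`|U₁| = n₁, …, |V₂| = m₂`. -/

namespace ThreeGenerators

section

variable {R : Type} [CommRing R] (a b c d : R)

def gens : Fin 3 → R := ![a * d, c * d, a * b]

def syz : Matrix (Fin 3) (Fin 2) R := !![b, c; 0, -a; -d, 0]

lemma lcomb_gens (y : Fin 3 → R) :
    lcomb (gens a b c d) y = y 0 * (a * d) + y 1 * (c * d) + y 2 * (a * b) := by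
  simp [lcomb, Fintype.linearCombination_apply, Fin.sum_univ_three, gens]

lemma syz_mulVecLin (x : Fin 2 → R) :
    (syz a b c d).mulVecLin x = ![b * x 0 + c * x 1, -(a * x 1), -(d * x 0)] := by
  ext p
  fin_cases p <;> simp [syz, Matrix.mulVec, dotProduct, Fin.sum_univ_two]

variable {a b c d} [IsDomain R]

lemma injective_syz_mulVecLin (ha : a ≠ 0) (hd : d ≠ 0) :
    Function.Injective (syz a b c d).mulVecLin := by
  refine (injective_iff_map_eq_zero _).2 fun x hx => ?_
  rw [syz_mulVecLin] at hx
  have hx₁ : x 1 = 0 := by simpa [ha] using congrFun hx 1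
  have hx₀ : x 0 = 0 := by simpa [hd] using congrFun hx 2
  ext p
  fin_cases p <;> assumption

lemma exact_syz_gens [DecompositionMonoid R] (hac : IsRelPrime a c) (hdab : IsRelPrime d (a * b))
    (ha : a ≠ 0) (hd : d ≠ 0) :
    Function.Exact (syz a b c d).mulVecLin (lcomb (gens a b c d)) := by
  intro y
  rw [lcomb_gens]
  constructor
  · intro hy
    obtain ⟨w, hw⟩ : d ∣ y 2 := hdab.dvd_of_dvd_mul_right
      ⟨-(y 0 * a + y 1 * c), by linear_combination hy⟩
    have hy' : y 0 * a + y 1 * c + w * (a * b) = 0 :=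
      (mul_eq_zero.1 (by linear_combination hy - hw * (a * b) : d * _ = 0)).resolve_left hd
    obtain ⟨u, hu⟩ : a ∣ y 1 := hac.dvd_of_dvd_mul_right
      ⟨-(y 0 + w * b), by linear_combination hy'⟩
    have hy'' : y 0 + u * c + w * b = 0 :=
      (mul_eq_zero.1 (by linear_combination hy' - hu * c : a * _ = 0)).resolve_left ha
    refine ⟨![-w, -u], ?_⟩
    rw [syz_mulVecLin]
    ext p
    fin_cases p
    · simpa using (by linear_combination -hy'' : b * -w + c * -u = y 0)
    · simpa using (by linear_combination -hu : -(a * -u) = y 1)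
    · simpa using (by linear_combination -hw : -(d * -w) = y 2)
  · rintro ⟨x, rfl⟩
    simp only [syz_mulVecLin, Matrix.cons_val]
    ring

end

variable {R : Type} [CommRing R] {σ : Type} {a b c d : MvPolynomial σ R} {α β γ δ : ℕ}

lemma isHomogeneous_gens (ha : a.IsHomogeneous α) (hb : b.IsHomogeneous β)
    (hc : c.IsHomogeneous γ) (hd : d.IsHomogeneous δ) (j : Fin 3) :
    (gens a b c d j).IsHomogeneous (![α + δ, γ + δ, α + β] j) := by
  fin_cases j
  exacts [ha.mul hd, hc.mul hd, ha.mul hb]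

lemma isHomogeneous_syz (ha : a.IsHomogeneous α) (hb : b.IsHomogeneous β)
    (hc : c.IsHomogeneous γ) (hd : d.IsHomogeneous δ) (p : Fin 3) (q : Fin 2) :
    syz a b c d p q = 0 ∨ (![α + δ, γ + δ, α + β] p ≤ ![α + β + δ, γ + δ + α] q ∧
      (syz a b c d p q).IsHomogeneous (![α + β + δ, γ + δ + α] q - ![α + δ, γ + δ, α + β] p)) := by
  fin_cases p <;> fin_cases q <;> simp [syz]
  · exact .inr <| by convert hb using 1; omega
  · exact .inr ⟨by omega, by convert hc using 1; omega⟩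
  · exact .inr ha.neg
  · exact .inr hd.neg

lemma constantCoeff_gens (ha : constantCoeff a = 0) (hd : constantCoeff d = 0) (j : Fin 3) :
    constantCoeff (gens a b c d j) = 0 := by
  fin_cases j <;> simp [gens, ha, hd]

lemma constantCoeff_syz (ha : constantCoeff a = 0) (hb : constantCoeff b = 0)
    (hc : constantCoeff c = 0) (hd : constantCoeff d = 0) (p : Fin 3) (q : Fin 2) :
    constantCoeff (syz a b c d p q) = 0 := by
  fin_cases p <;> fin_cases q <;> simp [syz, ha, hb, hc, hd]

end ThreeGenerators

namespace MinimalGradedFreeResolution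

variable {K : Type} [Field K] {σ : Type} {I : Ideal (MvPolynomial σ K)} {r₁ r₂ : ℕ}

def rankLengthTwo (r₁ r₂ : ℕ) : ℕ → ℕ
  | 1 => r₁
  | 2 => r₂
  | _ => 0

def degLengthTwo (d₁ : Fin r₁ → ℕ) (d₂ : Fin r₂ → ℕ) :
    ∀ i, Fin (rankLengthTwo r₁ r₂ i) → ℕ
  | 1 => d₁
  | 2 => d₂
  | _ => fun _ => 0

noncomputable def matLengthTwo (M : Matrix (Fin r₁) (Fin r₂) (MvPolynomial σ K)) :
    ∀ i, Matrix (Fin (rankLengthTwo r₁ r₂ (i + 1))) (Fin (rankLengthTwo r₁ r₂ (i + 2)))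
      (MvPolynomial σ K)
  | 0 => M
  | _ + 1 => 0

noncomputable def ofLengthTwo (g : Fin r₁ → MvPolynomial σ K)
    (M : Matrix (Fin r₁) (Fin r₂) (MvPolynomial σ K))
    (d₁ : Fin r₁ → ℕ) (d₂ : Fin r₂ → ℕ) (hr₁ : 0 < r₁) (hr₂ : 0 < r₂)
    (hspan : Ideal.span (Set.range g) = I) (hg : ∀ j, (g j).IsHomogeneous (d₁ j))
    (hM : ∀ p q, M p q = 0 ∨ (d₁ p ≤ d₂ q ∧ (M p q).IsHomogeneous (d₂ q - d₁ p)))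
    (hexact : Function.Exact M.mulVecLin (lcomb g)) (hinj : Function.Injective M.mulVecLin)
    (hg₀ : ∀ j, constantCoeff (g j) = 0) (hM₀ : ∀ p q, constantCoeff (M p q) = 0) :
    MinimalGradedFreeResolution I where
  len := 2
  rank := rankLengthTwo r₁ r₂
  deg := degLengthTwo d₁ d₂
  gen := g
  mat := matLengthTwo M
  rank_pos i h₁ h₂ := by interval_cases i <;> assumption
  rank_zero i hi := by
    obtain ⟨k, rfl⟩ : ∃ k, i = k + 3 := ⟨i - 3, by omega⟩
    rfl
  span_gen := hspan
  gen_hom := hg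
  mat_hom
    | 0 => hM
    | _ + 1 => fun _ _ => Or.inl rfl
  exact_one := hexact
  exact_succ
    | 0 => by
      show Function.Exact (0 : Matrix (Fin r₂) (Fin 0) (MvPolynomial σ K)).mulVecLin M.mulVecLin
      rwa [Matrix.mulVecLin_zero, LinearMap.exact_zero_iff_injective]
    | k + 1 => fun y => by
      obtain rfl : y = 0 := funext fun p => p.elim0
      exact Iff.intro (fun _ => ⟨0, map_zero _⟩) fun _ => map_zero _
  minimal_gen := hg₀
  minimal_mat
    | 0 => hM₀
    | _ + 1 => fun _ _ => map_zero _

lemma regIdeal_of_len_eq_two (res : MinimalGradedFreeResolution I) (h : res.len = 2) :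
    res.regIdeal = max (Finset.univ.sup (res.deg 1)) (Finset.univ.sup (res.deg 2) - 1) := by
  simp [regIdeal, h, Finset.range_add_one, max_comm]

end MinimalGradedFreeResolution

section Monomials

variable {σ : Type}

lemma isHomogeneous_prod_X {R : Type} [CommSemiring R] (S : Finset σ) :
    (∏ i ∈ S, X i : MvPolynomial σ R).IsHomogeneous S.card := by
  simpa using IsHomogeneous.prod S (fun i => (X i : MvPolynomial σ R)) 1 fun i _ =>
    isHomogeneous_X R i

lemma isRelPrime_prod_X_of_disjoint {R : Type} [CommRing R] [IsDomain R]
    [UniqueFactorizationMonoid R] {S T : Finset σ} (h : Disjoint S T) :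
    IsRelPrime (∏ i ∈ S, X i : MvPolynomial σ R) (∏ j ∈ T, X j) :=
  IsRelPrime.prod_left fun i hi => IsRelPrime.prod_right fun j hj =>
    X_prime.irreducible.isRelPrime_iff_not_dvd.2 <| by
      rw [X_dvd_X]
      exact Finset.disjoint_left.1 h hi ∘ (· ▸ hj)

lemma MvPolynomial.IsHomogeneous.constantCoeff_eq_zero {R : Type} [CommSemiring R]
    {p : MvPolynomial σ R} {n : ℕ} (hp : p.IsHomogeneous n) (hn : n ≠ 0) :
    constantCoeff p = 0 := by
  rw [constantCoeff_eq]
  exact hp.coeff_eq_zero (by simpa using hn.symm)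

end Monomials

lemma coverIdeal_eq_span_prod_X (K : Type) [Field K] {V : Type} [Fintype V] {G : SimpleGraph V}
    {ι : Type} (S : ι → Finset V) (hS : ∀ w, IsVertexCover G w ↔ ∃ k, S k ⊆ w) :
    coverIdeal K G = Ideal.span (Set.range fun k => ∏ x ∈ S k, X x) := by
  classical
  apply le_antisymm
  · rw [coverIdeal, Ideal.span_le]
    rintro _ ⟨w, hw, rfl⟩
    obtain ⟨k, hk⟩ := (hS w).1 hw
    rw [← Finset.prod_sdiff hk]
    exact Ideal.mul_mem_left _ _ (Ideal.subset_span ⟨k, rfl⟩)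
  · rw [Ideal.span_le]
    rintro _ ⟨k, rfl⟩
    exact Ideal.subset_span ⟨S k, (hS _).2 ⟨k, subset_rfl⟩, rfl⟩

lemma IsVertexCover.mono {V : Type} {G : SimpleGraph V} {w w' : Finset V}
    (hw : IsVertexCover G w) (h : w ⊆ w') : IsVertexCover G w' :=
  fun _ _ hab => (hw hab).imp (@h _) (@h _)

lemma Fin.card_filter_le_val (a b : ℕ) :
    (Finset.univ.filter fun i : Fin (a + b) => a ≤ (i : ℕ)).card = b := by
  have := Finset.card_filter_add_card_filter_not (s := Finset.univ)
    (p := fun i : Fin (a + b) => (i : ℕ) < a)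
  simp only [Fin.card_filter_val_lt, not_lt, Finset.card_univ, Fintype.card_fin] at this
  omega

namespace TwoBlock

variable (n₁ n₂ m₁ m₂ : ℕ)

def U₁ : Finset (Fin (n₁ + n₂) ⊕ Fin (m₁ + m₂)) :=
  ({i | (i : ℕ) < n₁} : Finset (Fin (n₁ + n₂))).disjSum ∅
def U₂ : Finset (Fin (n₁ + n₂) ⊕ Fin (m₁ + m₂)) :=
  ({i | n₁ ≤ (i : ℕ)} : Finset (Fin (n₁ + n₂))).disjSum ∅
def V₁ : Finset (Fin (n₁ + n₂) ⊕ Fin (m₁ + m₂)) :=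
  (∅ : Finset (Fin (n₁ + n₂))).disjSum {j | (j : ℕ) < m₁}
def V₂ : Finset (Fin (n₁ + n₂) ⊕ Fin (m₁ + m₂)) :=
  (∅ : Finset (Fin (n₁ + n₂))).disjSum {j | m₁ ≤ (j : ℕ)}

def minimalCovers : Fin 3 → Finset (Fin (n₁ + n₂) ⊕ Fin (m₁ + m₂)) :=
  ![U₁ n₁ n₂ m₁ m₂ ∪ V₂ n₁ n₂ m₁ m₂, V₁ n₁ n₂ m₁ m₂ ∪ V₂ n₁ n₂ m₁ m₂,
    U₁ n₁ n₂ m₁ m₂ ∪ U₂ n₁ n₂ m₁ m₂]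

lemma isVertexCover_minimalCovers (k : Fin 3) :
    IsVertexCover (twoBlockBipartite n₁ n₂ m₁ m₂) (minimalCovers n₁ n₂ m₁ m₂ k) := by
  fin_cases k <;> rintro (i | j) (i' | j') h <;>
    simp [twoBlockBipartite, minimalCovers, U₁, U₂, V₁, V₂] at h ⊢ <;> omega

lemma isVertexCover_iff (w : Finset (Fin (n₁ + n₂) ⊕ Fin (m₁ + m₂))) :
    IsVertexCover (twoBlockBipartite n₁ n₂ m₁ m₂) w ↔ ∃ k, minimalCovers n₁ n₂ m₁ m₂ k ⊆ w := by
  refine ⟨fun hw => ?_, fun ⟨k, hk⟩ => (isVertexCover_minimalCovers _ _ _ _ k).mono hk⟩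
  have edge : ∀ (i : Fin (n₁ + n₂)) (j : Fin (m₁ + m₂)), (i : ℕ) < n₁ ∨ (n₁ ≤ i ∧ m₁ ≤ j) →
      Sum.inl i ∈ w ∨ Sum.inr j ∈ w := fun i j h => hw (by simpa [twoBlockBipartite] using h)
  by_cases hU₁ : ∀ i : Fin (n₁ + n₂), (i : ℕ) < n₁ → Sum.inl i ∈ w
  · by_cases hU₂ : ∀ i : Fin (n₁ + n₂), n₁ ≤ (i : ℕ) → Sum.inl i ∈ w
    · refine ⟨2, ?_⟩
      rintro (i | j) h <;> simp [minimalCovers, U₁, U₂] at h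
      obtain h | h := h
      exacts [hU₁ i h, hU₂ i h]
    · push Not at hU₂
      obtain ⟨i₀, hi₀, hi₀w⟩ := hU₂
      refine ⟨0, ?_⟩
      rintro (i | j) h <;> simp [minimalCovers, U₁, V₂] at h
      exacts [hU₁ i h, (edge i₀ j (.inr ⟨hi₀, h⟩)).resolve_left hi₀w]
  · push Not at hU₁
    obtain ⟨i₀, hi₀, hi₀w⟩ := hU₁
    refine ⟨1, fun v _ => ?_⟩
    obtain i | j := v
    · simp [minimalCovers, V₁, V₂] at *
    · exact (edge i₀ j (.inl hi₀)).resolve_left hi₀w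

lemma exists_coverIdeal_eq_span_gens (K : Type) [Field K] :
    ∃ a b c d : MvPolynomial (Fin (n₁ + n₂) ⊕ Fin (m₁ + m₂)) K,
      coverIdeal K (twoBlockBipartite n₁ n₂ m₁ m₂) =
        Ideal.span (Set.range (ThreeGenerators.gens a b c d)) ∧
      a.IsHomogeneous n₁ ∧ b.IsHomogeneous n₂ ∧ c.IsHomogeneous m₁ ∧ d.IsHomogeneous m₂ ∧
      a ≠ 0 ∧ d ≠ 0 ∧ IsRelPrime a c ∧ IsRelPrime d (a * b) := by
  have prod_ne_zero (s : Finset (Fin (n₁ + n₂) ⊕ Fin (m₁ + m₂))) :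
      (∏ x ∈ s, X x : MvPolynomial _ K) ≠ 0 :=
    Finset.prod_ne_zero_iff.2 fun x _ => X_ne_zero x
  have disjU₁V₁ : Disjoint (U₁ n₁ n₂ m₁ m₂) (V₁ n₁ n₂ m₁ m₂) :=
    Finset.disjoint_left.2 <| by rintro (i | j) <;> simp [U₁, V₁]
  have disjV₂U₁ : Disjoint (V₂ n₁ n₂ m₁ m₂) (U₁ n₁ n₂ m₁ m₂) :=
    Finset.disjoint_left.2 <| by rintro (i | j) <;> simp [U₁, V₂]
  have disjV₂U₂ : Disjoint (V₂ n₁ n₂ m₁ m₂) (U₂ n₁ n₂ m₁ m₂) :=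
    Finset.disjoint_left.2 <| by rintro (i | j) <;> simp [U₂, V₂]
  have disjV : Disjoint (V₁ n₁ n₂ m₁ m₂) (V₂ n₁ n₂ m₁ m₂) :=
    Finset.disjoint_left.2 <| by rintro (i | j) <;> simp [V₁, V₂]
  have disjU : Disjoint (U₁ n₁ n₂ m₁ m₂) (U₂ n₁ n₂ m₁ m₂) :=
    Finset.disjoint_left.2 <| by rintro (i | j) <;> simp [U₁, U₂]
  refine ⟨_, _, _, _, ?_, ?_, ?_, ?_, ?_, prod_ne_zero _, prod_ne_zero _,
    isRelPrime_prod_X_of_disjoint disjU₁V₁,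
    (isRelPrime_prod_X_of_disjoint disjV₂U₁).mul_right (isRelPrime_prod_X_of_disjoint disjV₂U₂)⟩
  · rw [coverIdeal_eq_span_prod_X K _ (isVertexCover_iff n₁ n₂ m₁ m₂)]
    congr 2
    ext k : 1
    fin_cases k <;> simp [minimalCovers, ThreeGenerators.gens, Finset.prod_union, disjV₂U₁.symm,
      disjV, disjU]
  all_goals convert isHomogeneous_prod_X _
  · simp [U₁, Fin.card_filter_val_lt]
  · simp [U₂, Fin.card_filter_le_val]
  · simp [V₁, Fin.card_filter_val_lt]
  · simp [V₂, Fin.card_filter_le_val]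

end TwoBlock

/-- For the bipartite graph `G = K_{U₁,V} ∪ K_{U₂,V₂}`, the graded minimal
free resolution of `R/J_G` is
`0 → R(-n-m₂) ⊕ R(-m-n₁) → R(-(n₁+m₂)) ⊕ R(-m) ⊕ R(-n) → R → 0`,
where `n = n₁ + n₂`, `m = m₁ + m₂`; in particular
`reg(J_G) = max (n + m₂ - 1) (m + n₁ - 1)`. -/
theorem resolution_coverIdeal_twoBlockBipartite (K : Type) [Field K]
    (n₁ n₂ m₁ m₂ : ℕ) (h₁ : 1 ≤ n₁) (h₂ : 1 ≤ n₂) (h₃ : 1 ≤ m₁) (h₄ : 1 ≤ m₂) :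
    ∃ res : MinimalGradedFreeResolution (coverIdeal K (twoBlockBipartite n₁ n₂ m₁ m₂)),
      res.len = 2 ∧ res.rank 1 = 3 ∧ res.rank 2 = 2 ∧
      Finset.univ.val.map (res.deg 1) = ({n₁ + m₂, m₁ + m₂, n₁ + n₂} : Multiset ℕ) ∧
      Finset.univ.val.map (res.deg 2) =
        ({(n₁ + n₂) + m₂, (m₁ + m₂) + n₁} : Multiset ℕ) ∧
      res.regIdeal = max ((n₁ + n₂) + m₂ - 1) ((m₁ + m₂) + n₁ - 1) := by
  obtain ⟨a, b, c, d, hspan, ha, hb, hc, hd, ha₀, hd₀, hac, hdab⟩ :=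
    TwoBlock.exists_coverIdeal_eq_span_gens n₁ n₂ m₁ m₂ K
  have ha' := ha.constantCoeff_eq_zero (by omega)
  have hb' := hb.constantCoeff_eq_zero (by omega)
  have hc' := hc.constantCoeff_eq_zero (by omega)
  have hd' := hd.constantCoeff_eq_zero (by omega)
  let res := open ThreeGenerators in
    MinimalGradedFreeResolution.ofLengthTwo (gens a b c d) (syz a b c d) _ _
      (by norm_num) (by norm_num) hspan.symm
      (isHomogeneous_gens ha hb hc hd) (isHomogeneous_syz ha hb hc hd)
      (exact_syz_gens hac hdab ha₀ hd₀) (injective_syz_mulVecLin ha₀ hd₀)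
      (constantCoeff_gens ha' hd') (constantCoeff_syz ha' hb' hc' hd')
  refine ⟨res, rfl, rfl, rfl, rfl, rfl, ?_⟩
  rw [res.regIdeal_of_len_eq_two rfl]
  show max (Finset.univ.sup ![n₁ + m₂, m₁ + m₂, n₁ + n₂])
    (Finset.univ.sup ![n₁ + n₂ + m₂, m₁ + m₂ + n₁] - 1) = _
  simp [Fin.univ_succ]
  omega
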